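/- In a p-core γ, if an extremal cell at the top of its column occurs in row r, then in every row weakly lower than r, any extremal cell of the same p-residue also lies at the top of its column. (An extremal cell of γ is a cell (i,j) ∈ γ with (i+1,j+1) ∉ γ.) -/

import Mathlib

/-- A partition: a weakly decreasing, finitely supported sequence of naturals
(0-indexed rows, French notation: row 0 is the bottom row). -/
structure Ptn where
  part : ℕ → ℕ
  antitone' : ∀ ⦃i j : ℕ⦄, i ≤ j → part j ≤ part i
  finite' : ∃ N, ∀ i, N ≤ i → part i = 0

namespace Ptn

/-- The diagram (set of cells) of a partition; cell `(i,j)` means row `i`, column `j`,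
both 0-indexed. -/
def cells (mu : Ptn) : Set (ℕ × ℕ) := {c | c.2 < mu.part c.1}

lemma colFinite (mu : Ptn) (j : ℕ) : {i : ℕ | j < mu.part i}.Finite := by
  obtain ⟨N, hN⟩ := mu.finite'
  apply (Set.finite_Iio N).subset
  intro i hi
  simp only [Set.mem_setOf_eq] at hi
  by_contra h
  simp only [Set.mem_Iio, not_lt] at h
  simp [hN i h] at hi

/-- Length of column `j` of `mu`, i.e. the `j`-th part of the conjugate partition. -/
noncomputable def colLen (mu : Ptn) (j : ℕ) : ℕ := Set.ncard {i : ℕ | j < mu.part i}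

/-- The conjugate partition. -/
noncomputable def conj (mu : Ptn) : Ptn where
  part := mu.colLen
  antitone' := by
    intro i j hij
    exact Set.ncard_le_ncard (fun t ht => lt_of_le_of_lt hij ht) (mu.colFinite i)
  finite' := by
    refine ⟨mu.part 0, fun j hj => ?_⟩
    unfold colLen
    convert Set.ncard_empty ℕ
    ext i
    simp only [Set.mem_setOf_eq, Set.mem_empty_iff_false, iff_false, not_lt]
    exact le_trans (mu.antitone' (Nat.zero_le i)) hj

end Ptn

namespace Ptn

/-- Hook length of the lattice square `(i,j)` (0-indexed) in `mu`. -/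
noncomputable def hook (mu : Ptn) (i j : ℕ) : ℕ :=
  (mu.part i - j) + (mu.colLen j - i) - 1

/-- Number of cells of the partition. -/
noncomputable def size (mu : Ptn) : ℕ := Set.ncard mu.cells

/-- Number of parts. -/
noncomputable def len (mu : Ptn) : ℕ := mu.colLen 0

end Ptn

/-- A `p`-core: a partition with no cell of hook length `p`. -/
def IsPCore (p : ℕ) (mu : Ptn) : Prop := ∀ i j, j < mu.part i → mu.hook i j ≠ p

/-- The `p`-residue of the lattice square `(i,j)` (0-indexed): `(j - i) mod p`. -/
def residue (p i j : ℕ) : ℤ := ((j : ℤ) - (i : ℤ)) % (p : ℤ)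

/-- A partition is `k`-bounded when all its parts are at most `k`. -/
def KBounded (k : ℕ) (mu : Ptn) : Prop := mu.part 0 ≤ k

/-- The number of cells of hook length at most `k` in row `i` of `γ`. -/
noncomputable def rowCount (k : ℕ) (γ : Ptn) (i : ℕ) : ℕ :=
  Set.ncard {j : ℕ | j < γ.part i ∧ γ.hook i j ≤ k}

/-- Dominance order: `Dominates mu lam` means `mu ⊵ lam`. -/
def Dominates (mu lam : Ptn) : Prop :=
  mu.size = lam.size ∧
  ∀ n, (∑ i ∈ Finset.range n, lam.part i) ≤ ∑ i ∈ Finset.range n, mu.part i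

/-- Containment of partitions. -/
def SubPtn (nu mu : Ptn) : Prop := ∀ i, nu.part i ≤ mu.part i

/-- `mu/nu` is a horizontal `ℓ`-strip. -/
def HStrip (mu nu : Ptn) (l : ℕ) : Prop :=
  SubPtn nu mu ∧ mu.size = nu.size + l ∧ ∀ i, mu.part (i + 1) ≤ nu.part i

/-- `mu/nu` is a vertical `ℓ`-strip. -/
def VStrip (mu nu : Ptn) (l : ℕ) : Prop :=
  SubPtn nu mu ∧ mu.size = nu.size + l ∧ ∀ i, mu.part i ≤ nu.part i + 1

/-- `(i,j)` is a removable corner of `mu` (0-indexed). -/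
def Removable (mu : Ptn) (i j : ℕ) : Prop := j + 1 = mu.part i ∧ mu.part (i + 1) ≤ j

/-- `(i,j)` is an addable corner of `mu` (0-indexed). -/
def Addable (mu : Ptn) (i j : ℕ) : Prop :=
  j = mu.part i ∧ (i = 0 ∨ mu.part i < mu.part (i - 1))

/-- The cells of the skew shape `γ/ρ`. -/
def skewCells (γ ρ : Ptn) : Set (ℕ × ℕ) := {c | ρ.part c.1 ≤ c.2 ∧ c.2 < γ.part c.1}

/-- The hook length of the lattice square `(i,j)` relative to the skew shape `γ/ρ`:
the number of cells of `γ/ρ` lying in the L with corner `(i,j)`. -/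
noncomputable def skewHook (γ ρ : Ptn) (i j : ℕ) : ℕ :=
  Set.ncard {c : ℕ × ℕ | c ∈ skewCells γ ρ ∧ ((c.1 = i ∧ j ≤ c.2) ∨ (c.2 = j ∧ i ≤ c.1))}

/-- A filling of the shape `γ` with letters `1, …, r`: rows weakly increase and
columns strictly increase. Squares outside `γ` carry the value `0`. -/
structure Filling (γ : Ptn) (r : ℕ) where
  entry : ℕ × ℕ → ℕ
  supp : ∀ c : ℕ × ℕ, entry c ≠ 0 ↔ c ∈ γ.cells
  lettersLe : ∀ c ∈ γ.cells, entry c ≤ r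
  rowsWeak : ∀ i j j', j ≤ j' → j' < γ.part i → entry (i, j) ≤ entry (i, j')
  colsStrict : ∀ i j, j < γ.part (i + 1) → entry (i, j) < entry (i + 1, j)

/-- The number of distinct `(k+1)`-residues occupied by the letter `a` in a filling. -/
noncomputable def kweight (k : ℕ) {γ : Ptn} {r : ℕ} (F : Filling γ r) (a : ℕ) : ℕ :=
  Set.ncard {m : ℤ | ∃ c ∈ γ.cells, F.entry c = a ∧ residue (k + 1) c.1 c.2 = m}

/-- The number of cells occupied by the letter `a` in a filling. -/
noncomputable def cellweight {γ : Ptn} {r : ℕ} (F : Filling γ r) (a : ℕ) : ℕ :=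
  Set.ncard {c : ℕ × ℕ | c ∈ γ.cells ∧ F.entry c = a}

/-- A `k`-tableau: a filling in which, for each letter `a ∈ {1,…,r}`, the cells
containing `a` occupy exactly `α a` distinct `(k+1)`-residues. -/
def IsKTab (k : ℕ) {γ : Ptn} {r : ℕ} (F : Filling γ r) (α : ℕ → ℕ) : Prop :=
  ∀ a, 1 ≤ a → a ≤ r → kweight k F a = α a

/-- The number of `k`-tableaux of shape `γ` with letters `1,…,r` and `k`-weight `α`. -/
noncomputable def Kcard (k : ℕ) (γ : Ptn) (r : ℕ) (α : ℕ → ℕ) : ℕ :=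
  Nat.card {F : Filling γ r // IsKTab k F α}

/-- The weight function of a partition: letter `a` gets weight `lam_a`. -/
noncomputable def wtOf (lam : Ptn) : ℕ → ℕ := fun a => lam.part (a - 1)

/-- The `k`-Kostka number `K^{(k)}_{μλ}` (given the bijection `c` from `k`-bounded
partitions to `(k+1)`-cores): the number of `k`-tableaux of shape `c μ` and `k`-weight `λ`. -/
noncomputable def KNum (k : ℕ) (c : Ptn → Ptn) (mu lam : Ptn) : ℕ :=
  Kcard k (c mu) lam.len (wtOf lam)

/-- The `k`-conjugate `λ^{ω_k} = c⁻¹((c λ)')`, expressed via `c` and its inverse `cinv`. -/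
noncomputable def wkfun (c cinv : Ptn → Ptn) (lam : Ptn) : Ptn := cinv (Ptn.conj (c lam))

/-- Hypotheses on the bijection `c` from `k`-bounded partitions to `(k+1)`-cores and
its inverse `cinv`. -/
def CorePair (k : ℕ) (c cinv : Ptn → Ptn) : Prop :=
  (∀ lam, KBounded k lam →
      IsPCore (k + 1) (c lam) ∧ ∀ i, rowCount k (c lam) i = lam.part i) ∧
  (∀ lam, KBounded k lam → cinv (c lam) = lam) ∧
  (∀ γ, IsPCore (k + 1) γ → KBounded k (cinv γ) ∧ c (cinv γ) = γ) ∧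
  (∀ γ, IsPCore (k + 1) γ → IsPCore (k + 1) (Ptn.conj γ))

/-- The ring of symmetric functions, presented as the polynomial ring
`ℤ[h₁, h₂, h₃, …]` in the (algebraically independent) complete homogeneous
symmetric functions: the variable `X n` stands for `h_{n+1}`. -/
abbrev SF := MvPolynomial ℕ ℤ

/-- The complete homogeneous symmetric function `h_n` (with `h_n = 0` for `n < 0`,
`h_0 = 1`). -/
noncomputable def hh (n : ℤ) : SF :=
  if n < 0 then 0 else if n = 0 then 1 else MvPolynomial.X (n.toNat - 1)

/-- `h_λ = h_{λ_1} h_{λ_2} ⋯`. -/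
noncomputable def hprod (lam : Ptn) : SF := ∏ᶠ i : ℕ, hh (lam.part i)

/-- The Schur function `s_λ`, via the Jacobi–Trudi determinant
`s_λ = det(h_{λ_i - i + j})`. -/
noncomputable def schur (lam : Ptn) : SF :=
  Matrix.det (Matrix.of fun i j : Fin lam.len => hh ((lam.part i : ℤ) - (i : ℤ) + (j : ℤ)))

/-- The subring `Λ^{(k)} = ℤ[h_1, …, h_k]`. -/
noncomputable def Lk (k : ℕ) : Subalgebra ℤ SF :=
  Algebra.adjoin ℤ (Set.range fun i : Fin k => (MvPolynomial.X (i : ℕ) : SF))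

/-- `s` is the family of `k`-Schur functions: it satisfies the unitriangular system
`h_λ = s_λ^{(k)} + Σ_{μ ⊳ λ} K^{(k)}_{μλ} s_μ^{(k)}` over `k`-bounded partitions. -/
def KSchurFam (k : ℕ) (c : Ptn → Ptn) (s : Ptn → SF) : Prop :=
  ∀ lam, KBounded k lam →
    hprod lam = s lam +
      ∑ᶠ mu ∈ {mu : Ptn | KBounded k mu ∧ Dominates mu lam ∧ mu ≠ lam},
        (KNum k c mu lam) • s mu

/-- The column partition `(1^l)`. -/
def colPtn (l : ℕ) : Ptn where
  part := fun i => if i < l then 1 else 0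
  antitone' := by
    intro i j hij
    by_cases h : j < l
    · simp [h, Nat.lt_of_le_of_lt hij h]
    · simp [h]
  finite' := ⟨l, fun i hi => by simp [Nat.not_lt.mpr hi]⟩

/-- The elementary symmetric function `e_l = s_{(1^l)}`. -/
noncomputable def ee (l : ℕ) : SF := schur (colPtn l)

/-- Pointwise sum of partitions. -/
def addPtn (mu nu : Ptn) : Ptn where
  part := fun i => mu.part i + nu.part i
  antitone' := fun i j hij => Nat.add_le_add (mu.antitone' hij) (nu.antitone' hij)
  finite' := by
    obtain ⟨N, hN⟩ := mu.finite'
    obtain ⟨M, hM⟩ := nu.finite'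
    exact ⟨N + M, fun i hi => by
      show mu.part i + nu.part i = 0
      rw [hN i (le_trans (Nat.le_add_right N M) hi), hM i (le_trans (Nat.le_add_left M N) hi)]⟩

/-- `μ ∪ ν`: the weakly decreasing rearrangement of the concatenation of the parts
of `μ` and `ν` (obtained as the conjugate of the sum of the conjugates). -/
noncomputable def unionPtn (mu nu : Ptn) : Ptn := Ptn.conj (addPtn (Ptn.conj mu) (Ptn.conj nu))

/-- The `k`-rectangle `(l^{k-l+1})`. -/
def rectPtn (k l : ℕ) : Ptn where
  part := fun i => if i < k - l + 1 then l else 0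
  antitone' := by
    intro i j hij
    by_cases h : j < k - l + 1
    · simp [h, Nat.lt_of_le_of_lt hij h]
    · simp [h]
  finite' := ⟨k - l + 1, fun i hi => by simp [Nat.not_lt.mpr hi]⟩

/-!
Read off the beta-numbers `βᵢ = λᵢ - i` of `γ`. The integers missing from `{βᵢ}` are exactly
`x + 1 - λ'ₓ`, and the hook of the cell `(i, x)` is the difference of `βᵢ` and that
missing number; so the beta-set of a `p`-core is closed under `b ↦ b - p`. In particular
consecutive beta-numbers of a `p`-core differ by at most `p`.

The cell `(r, j)` is extremal at the top of its column exactly when `c = j - r` lies strictly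
between the consecutive beta-numbers `β_{r+1} < β_r`, hence is not a beta-number; the
extremal cell `(m, j')` fails to be at the top of its column exactly when `b = j' - m` is the
beta-number `β_{m+1}`. If `b ≡ c (mod p)`, then `b ≥ β_{r+1} ≥ β_r - p > c - p`, so `c` is
reached from `b` by subtracting multiples of `p`, and would be a beta-number.
-/

namespace Ptn

variable (μ : Ptn)

noncomputable def beta (i : ℕ) : ℤ := (μ.part i : ℤ) - i

noncomputable def coBeta (x : ℕ) : ℤ := (x : ℤ) + 1 - μ.colLen x

theorem exists_setOf_lt_part_eq_Iio (x : ℕ) :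
    ∃ n, {i | x < μ.part i} = Set.Iio n := by
  classical
  have hex : ∃ n, μ.part n ≤ x := by
    obtain ⟨N, hN⟩ := μ.finite'
    exact ⟨N, by simp [hN N le_rfl]⟩
  refine ⟨Nat.find hex, Set.ext fun i => ?_⟩
  simp only [Set.mem_ofPred_eq, Set.mem_Iio, Nat.lt_find_iff, not_le]
  exact ⟨fun hi k hk => hi.trans_le (μ.antitone' hk), fun h => h i le_rfl⟩

variable {μ}

theorem lt_colLen_iff {i x : ℕ} : i < μ.colLen x ↔ x < μ.part i := by
  obtain ⟨n, hn⟩ := μ.exists_setOf_lt_part_eq_Iio x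
  have hx : μ.colLen x = n := by rw [colLen, hn, Set.ncard_Iio_nat]
  rw [hx, ← Set.mem_Iio, ← hn, Set.mem_ofPred_eq]

variable (μ)

theorem beta_strictAnti : StrictAnti μ.beta :=
  strictAnti_nat_of_succ_lt fun i => by
    have := μ.antitone' (Nat.le_add_right i 1)
    simp only [beta]
    push_cast
    omega

theorem beta_ne_of_lt_of_lt {i : ℕ} {v : ℤ} (h₁ : μ.beta (i + 1) < v) (h₂ : v < μ.beta i)
    (k : ℕ) : μ.beta k ≠ v := by
  rintro rfl
  rcases le_or_gt k i with hk | hk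
  · exact (μ.beta_strictAnti.antitone hk).not_gt h₂
  · exact (μ.beta_strictAnti.antitone hk).not_gt h₁

theorem exists_beta_eq_or_coBeta_eq (v : ℤ) :
    (∃ k, μ.beta k = v) ∨ ∃ x, μ.coBeta x = v := by
  classical
  have hex : ∃ y, v < μ.coBeta y := by
    refine ⟨(v + μ.colLen 0).toNat, ?_⟩
    have : μ.colLen (v + μ.colLen 0).toNat ≤ μ.colLen 0 := μ.conj.antitone' (Nat.zero_le _)
    simp only [coBeta]
    omega
  set y := Nat.find hex
  have hy : v < μ.coBeta y := Nat.find_spec hex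
  by_cases hprev : ∃ x, x + 1 = y ∧ μ.coBeta x = v
  · obtain ⟨x, -, hx⟩ := hprev
    exact .inr ⟨x, hx⟩
  have hbelow : ∀ x, x + 1 = y → μ.coBeta x < v := fun x hx =>
    lt_of_le_of_ne (not_lt.mp (Nat.find_min hex (by omega))) fun h => hprev ⟨x, hx, h⟩
  simp only [coBeta] at hy hbelow
  refine .inl ⟨(y - v).toNat, ?_⟩
  have hk : ((y - v).toNat : ℤ) = y - v := Int.toNat_of_nonneg (by omega)
  have hle : μ.part (y - v).toNat ≤ y := by
    by_contra! h
    have := lt_colLen_iff.mpr h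
    omega
  have hge : y ≤ μ.part (y - v).toNat := by
    rcases Nat.eq_zero_or_pos y with h0 | hpos
    · omega
    · have := hbelow (y - 1) (by omega)
      have := lt_colLen_iff.mp (show (y - v).toNat < μ.colLen (y - 1) by omega)
      omega
  simp only [beta]
  omega

variable {μ} in
theorem hook_eq_beta_sub_coBeta {i x : ℕ} (hx : x < μ.part i) :
    (μ.hook i x : ℤ) = μ.beta i - μ.coBeta x := by
  have := lt_colLen_iff.mpr hx
  simp only [hook, beta, coBeta]
  omega

end Ptn

namespace IsPCore

variable {p : ℕ} {μ : Ptn}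

theorem exists_beta_eq_sub (h : IsPCore p μ) (i : ℕ) : ∃ k, μ.beta k = μ.beta i - p := by
  refine (μ.exists_beta_eq_or_coBeta_eq _).resolve_right ?_
  rintro ⟨x, hx⟩
  have hxi : x < μ.part i := by
    by_contra! hxi
    have : μ.colLen x ≤ i := not_lt.mp (mt Ptn.lt_colLen_iff.mp hxi.not_gt)
    simp only [Ptn.beta, Ptn.coBeta] at hx
    omega
  refine h i x hxi (Int.ofNat_inj.mp ?_)
  rw [Ptn.hook_eq_beta_sub_coBeta hxi, hx]
  ring

theorem exists_beta_eq_sub_mul (h : IsPCore p μ) (i t : ℕ) :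
    ∃ k, μ.beta k = μ.beta i - t * p := by
  induction t with
  | zero => exact ⟨i, by simp⟩
  | succ t ih =>
    obtain ⟨k, hk⟩ := ih
    obtain ⟨k', hk'⟩ := h.exists_beta_eq_sub k
    exact ⟨k', by rw [hk', hk]; push_cast; ring⟩

theorem beta_sub_le_beta_succ (hp : 0 < p) (h : IsPCore p μ) (i : ℕ) :
    μ.beta i - p ≤ μ.beta (i + 1) := by
  obtain ⟨k, hk⟩ := h.exists_beta_eq_sub i
  have hik : i < k := μ.beta_strictAnti.lt_iff_gt.mp (by rw [hk]; omega)
  exact hk ▸ μ.beta_strictAnti.antitone hik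

end IsPCore

theorem Int.exists_sub_mul_eq_of_modEq {a c : ℤ} {p : ℕ} (h : a ≡ c [ZMOD p])
    (hlt : c - p < a) : ∃ t : ℕ, a - t * p = c := by
  obtain ⟨u, hu⟩ := h.symm.dvd
  have hu0 : 0 ≤ u := by
    by_contra! hu0
    nlinarith
  exact ⟨u.toNat, by rw [Int.toNat_of_nonneg hu0]; linarith⟩

theorem stmt1_general (p : ℕ) (hp : 0 < p) (γ : Ptn) (hcore : IsPCore p γ)
    (r j : ℕ) (hcell : j < γ.part r)
    (htop : γ.part (r + 1) ≤ j)      -- `(r+1, j) ∉ γ` : it is at the top of its column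
    (m j' : ℕ) (hm : m ≤ r)
    (hext' : γ.part (m + 1) ≤ j' + 1) -- `(m, j')` is extremal
    (hres : residue p m j' = residue p r j) :
    γ.part (m + 1) ≤ j' := by
  by_contra! hnot
  have hb : γ.beta (m + 1) = (j' : ℤ) - m := by simp only [Ptn.beta]; push_cast; omega
  have hc : ∀ k, γ.beta k ≠ (j : ℤ) - r :=
    γ.beta_ne_of_lt_of_lt (i := r) (by simp only [Ptn.beta]; push_cast; omega)
      (by simp only [Ptn.beta]; omega)
  have hlow : (j : ℤ) - r - p < γ.beta (m + 1) :=
    calc (j : ℤ) - r - p < γ.beta r - p := by simp only [Ptn.beta]; omega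
      _ ≤ γ.beta (r + 1) := hcore.beta_sub_le_beta_succ hp r
      _ ≤ γ.beta (m + 1) := γ.beta_strictAnti.antitone (by omega)
  have hmod : γ.beta (m + 1) ≡ j - r [ZMOD p] := hb ▸ hres
  obtain ⟨t, ht⟩ := Int.exists_sub_mul_eq_of_modEq hmod hlow
  obtain ⟨k, hk⟩ := hcore.exists_beta_eq_sub_mul (m + 1) t
  exact hc k (hk.trans ht)

/-- In a `p`-core, if an extremal cell at the top of its column occurs
in row `r`, then in every row weakly lower than `r` any extremal cell of the same
`p`-residue also lies at the top of its column. -/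
theorem stmt1 (p : ℕ) (hp : 0 < p) (γ : Ptn) (hcore : IsPCore p γ)
    (r j : ℕ) (hcell : j < γ.part r)
    (hext : γ.part (r + 1) ≤ j + 1)  -- `(r+1, j+1) ∉ γ` : the cell is extremal
    (htop : γ.part (r + 1) ≤ j)      -- `(r+1, j) ∉ γ` : it is at the top of its column
    (m j' : ℕ) (hm : m ≤ r) (hcell' : j' < γ.part m)
    (hext' : γ.part (m + 1) ≤ j' + 1) -- `(m, j')` is extremal
    (hres : residue p m j' = residue p r j) :
    γ.part (m + 1) ≤ j' :=
  stmt1_general p hp γ hcore r j hcell htop m j' hm hext' hres
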